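/- Let p be a prime and d a natural number with d ≥ p. Then the p-adic valuation of the binomial coefficient C(d, p) equals the p-adic valuation of ⌊d/p⌋. -/

import Mathlib

/-!
Write `d = n + p`. Legendre's formula in the form `v_p(n!) = v_p(⌊n/p⌋!) + ⌊n/p⌋` shows that
adding `p` to `n` raises `v_p` of the factorial by `1 + v_p(⌊n/p⌋ + 1)`; since `v_p(p!) = 1`,
comparing valuations in `C(n + p, p) · p! · n! = (n + p)!` leaves `v_p(C(n + p, p)) = v_p(d/p)`.
-/

section

open Nat

variable {p : ℕ} [Fact p.Prime]

theorem padicValNat_factorial_eq_factorial_div_add_div (n : ℕ) :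
    padicValNat p n ! = padicValNat p (n / p)! + n / p := by
  rw [← padicValNat_mul_div_factorial, padicValNat_factorial_mul]

theorem padicValNat_factorial_self : padicValNat p p ! = 1 := by
  rw [padicValNat_factorial_eq_factorial_div_add_div,
    Nat.div_self (Fact.out : p.Prime).pos]
  simp

theorem padicValNat_factorial_add_self (n : ℕ) :
    padicValNat p (n + p)! = padicValNat p n ! + padicValNat p (n / p + 1) + 1 := by
  have hp : 0 < p := (Fact.out : p.Prime).pos
  rw [padicValNat_factorial_eq_factorial_div_add_div (n + p), Nat.add_div_right n hp,
    factorial_succ, padicValNat.mul (n / p).succ_ne_zero (factorial_ne_zero _),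
    padicValNat_factorial_eq_factorial_div_add_div n]
  ring

theorem padicValNat_add_choose_mul_factorial_mul_factorial (i j : ℕ) :
    padicValNat p ((i + j).choose j) + padicValNat p i ! + padicValNat p j ! =
      padicValNat p (i + j)! := by
  rw [← add_choose_mul_factorial_mul_factorial i j,
    padicValNat.mul (mul_ne_zero (choose_pos (Nat.le_add_left j i)).ne' (factorial_ne_zero i))
      (factorial_ne_zero j),
    padicValNat.mul (choose_pos (Nat.le_add_left j i)).ne' (factorial_ne_zero i)]

end

theorem padicValNat_choose_p (p d : ℕ) (hp : p.Prime) (hd : p ≤ d) :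
    padicValNat p (d.choose p) = padicValNat p (d / p) := by
  have : Fact p.Prime := ⟨hp⟩
  obtain ⟨n, rfl⟩ := Nat.exists_eq_add_of_le' hd
  have hfactorials := padicValNat_add_choose_mul_factorial_mul_factorial (p := p) n p
  rw [padicValNat_factorial_add_self, padicValNat_factorial_self] at hfactorials
  rw [Nat.add_div_right n hp.pos]
  omega
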